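/- Let Exp : q·ℤ⟦q⟧ → 1 + q·ℤ⟦q⟧ be defined on series with zero constant term by Exp(Σ_{n≥1} a_n q^n) = ∏_{n≥1} (1 − q^n)^{−a_n}. Then Exp is a group isomorphism from (q·ℤ⟦q⟧, +) onto (1 + q·ℤ⟦q⟧, ×), i.e. Exp(f + g) = Exp(f)·Exp(g), Exp(0) = 1, and Exp is bijective. -/

import Mathlib

namespace Stmt9Aux

lemma coeff_eq_of_dvd {N : ℕ} {a b : PowerSeries ℤ}
    (h : (PowerSeries.X : PowerSeries ℤ) ^ (N + 1) ∣ a - b) :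
    PowerSeries.coeff (R := ℤ) N a = PowerSeries.coeff (R := ℤ) N b := by
  have h2 := (PowerSeries.X_pow_dvd_iff.mp h) N (Nat.lt_succ_self N)
  rw [map_sub, sub_eq_zero] at h2
  exact h2

variable (V : ℕ → (PowerSeries ℤ)ˣ)
    (hV : ∀ n, 1 ≤ n → (V n : PowerSeries ℤ) = 1 - PowerSeries.X ^ n)

include hV

lemma tail_dvd (e : ℕ → ℤ) (N : ℕ) (s : Finset ℕ) (hs : ∀ n ∈ s, 1 ≤ n ∧ N ≤ n) :
    (PowerSeries.X : PowerSeries ℤ) ^ N ∣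
      ((∏ n ∈ s, V n ^ e n : (PowerSeries ℤ)ˣ) : PowerSeries ℤ) - 1 := by
  set I : Ideal (PowerSeries ℤ) := Ideal.span {(PowerSeries.X : PowerSeries ℤ) ^ N} with hI
  have hunit : ∀ n ∈ s,
      Units.map (Ideal.Quotient.mk I : PowerSeries ℤ →* PowerSeries ℤ ⧸ I) (V n) = 1 := by
    intro n hn
    ext
    simp only [Units.coe_map, MonoidHom.coe_coe, Units.val_one]
    rw [hV n (hs n hn).1, map_sub, map_one, map_pow]
    have : (Ideal.Quotient.mk I) PowerSeries.X ^ n = 0 := by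
      rw [← map_pow, Ideal.Quotient.eq_zero_iff_mem, hI, Ideal.mem_span_singleton]
      exact pow_dvd_pow _ (hs n hn).2
    rw [this, sub_zero]
  have key : Ideal.Quotient.mk I ((∏ n ∈ s, V n ^ e n : (PowerSeries ℤ)ˣ) : PowerSeries ℤ)
      = Ideal.Quotient.mk I 1 := by
    rw [map_one]
    calc Ideal.Quotient.mk I ((∏ n ∈ s, V n ^ e n : (PowerSeries ℤ)ˣ) : PowerSeries ℤ)
        = ((Units.map (Ideal.Quotient.mk I : PowerSeries ℤ →* PowerSeries ℤ ⧸ I)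
            (∏ n ∈ s, V n ^ e n) : _ˣ) : _) := by rw [Units.coe_map]; rfl
      _ = ((∏ n ∈ s, (Units.map (Ideal.Quotient.mk I : PowerSeries ℤ →* PowerSeries ℤ ⧸ I)
            (V n)) ^ e n : _ˣ) : _) := by
          rw [map_prod]
          congr 1
          exact Finset.prod_congr rfl fun n hn => map_zpow _ _ _
      _ = 1 := by
          rw [Finset.prod_congr rfl fun n hn => by rw [hunit n hn, one_zpow]]
          simp
  rw [← Ideal.mem_span_singleton, ← hI]
  exact Ideal.Quotient.eq.mp key

lemma zpow_coe (n : ℕ) (hn : 1 ≤ n) (k : ℤ) :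
    (PowerSeries.X : PowerSeries ℤ) ^ (n + 1) ∣
      ((V n ^ k : (PowerSeries ℤ)ˣ) : PowerSeries ℤ)
        - (1 - (k : PowerSeries ℤ) * PowerSeries.X ^ n) := by
  set I : Ideal (PowerSeries ℤ) := Ideal.span {(PowerSeries.X : PowerSeries ℤ) ^ (n + 1)} with hI
  set ε : PowerSeries ℤ ⧸ I := Ideal.Quotient.mk I (PowerSeries.X ^ n) with hε
  have hε2 : ε * ε = 0 := by
    rw [hε, ← map_mul, ← pow_add, Ideal.Quotient.eq_zero_iff_mem, hI, Ideal.mem_span_singleton]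
    exact pow_dvd_pow _ (by omega)
  set w : (PowerSeries ℤ ⧸ I)ˣ :=
    Units.map (Ideal.Quotient.mk I : PowerSeries ℤ →* PowerSeries ℤ ⧸ I) (V n) with hw
  have hwv : (w : PowerSeries ℤ ⧸ I) = 1 - ε := by
    rw [hw]
    simp only [Units.coe_map, MonoidHom.coe_coe]
    rw [hV n hn, map_sub, map_one, map_pow, hε, map_pow]
  have hmul : (1 - ε) * (1 + ε) = 1 := by linear_combination -hε2
  have hwinv : ((w⁻¹ : _ˣ) : PowerSeries ℤ ⧸ I) = 1 + ε := by
    calc ((w⁻¹ : _ˣ) : PowerSeries ℤ ⧸ I) = ↑w⁻¹ * ((1 - ε) * (1 + ε)) := by rw [hmul, mul_one]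
      _ = (↑w⁻¹ * ↑w) * (1 + ε) := by rw [hwv]; ring
      _ = 1 + ε := by rw [Units.inv_mul, one_mul]
  have main : ∀ k : ℤ, ((w ^ k : _ˣ) : PowerSeries ℤ ⧸ I) = 1 - (k : PowerSeries ℤ ⧸ I) * ε := by
    intro k
    induction k using Int.induction_on with
    | zero => simp
    | succ i ih =>
        rw [zpow_add_one, Units.val_mul, ih, hwv]
        push_cast
        linear_combination ((i : PowerSeries ℤ ⧸ I)) * hε2
    | pred i ih =>
        rw [show (-(i : ℤ) - 1) = (-(i : ℤ)) + -1 by ring, zpow_add, zpow_neg_one,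
          Units.val_mul, ih, hwinv]
        push_cast
        linear_combination ((i : PowerSeries ℤ ⧸ I)) * hε2
  have key : Ideal.Quotient.mk I ((V n ^ k : (PowerSeries ℤ)ˣ) : PowerSeries ℤ)
      = Ideal.Quotient.mk I (1 - (k : PowerSeries ℤ) * PowerSeries.X ^ n) := by
    have h1 : Ideal.Quotient.mk I ((V n ^ k : (PowerSeries ℤ)ˣ) : PowerSeries ℤ)
        = ((w ^ k : _ˣ) : PowerSeries ℤ ⧸ I) := by
      rw [hw, ← map_zpow, Units.coe_map]; rfl
    rw [h1, main k, map_sub, map_one, map_mul, map_intCast, ← hε]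
  rw [← Ideal.mem_span_singleton, ← hI]
  exact Ideal.Quotient.eq.mp key

lemma const_one (e : ℕ → ℤ) (N : ℕ) :
    PowerSeries.coeff (R := ℤ) 0
      ((∏ n ∈ Finset.Icc 1 N, V n ^ e n : (PowerSeries ℤ)ˣ) : PowerSeries ℤ) = 1 := by
  have h := tail_dvd V hV e 1 (Finset.Icc 1 N)
    (by intro n hn; simp [Finset.mem_Icc] at hn; omega)
  have := (PowerSeries.X_pow_dvd_iff.mp h) 0 (by omega)
  rw [map_sub, sub_eq_zero] at this
  simpa using this

lemma stab (e : ℕ → ℤ) (N M : ℕ) (h : N ≤ M) :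
    PowerSeries.coeff (R := ℤ) N ((∏ n ∈ Finset.Icc 1 M, V n ^ e n : (PowerSeries ℤ)ˣ) : PowerSeries ℤ)
      = PowerSeries.coeff (R := ℤ) N
          ((∏ n ∈ Finset.Icc 1 N, V n ^ e n : (PowerSeries ℤ)ˣ) : PowerSeries ℤ) := by
  have hsplit : Finset.Icc 1 M = Finset.Icc 1 N ∪ Finset.Ioc N M := by
    ext x; simp only [Finset.mem_Icc, Finset.mem_Ioc, Finset.mem_union]; omega
  have hdisj : Disjoint (Finset.Icc 1 N) (Finset.Ioc N M) := by
    rw [Finset.disjoint_left]; intro a ha hb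
    simp only [Finset.mem_Icc] at ha; simp only [Finset.mem_Ioc] at hb; omega
  rw [hsplit, Finset.prod_union hdisj, Units.val_mul]
  have hB := tail_dvd V hV e (N + 1) (Finset.Ioc N M)
    (by intro n hn; simp only [Finset.mem_Ioc] at hn; omega)
  apply coeff_eq_of_dvd
  have : ((∏ n ∈ Finset.Icc 1 N, V n ^ e n : (PowerSeries ℤ)ˣ) : PowerSeries ℤ)
        * ((∏ n ∈ Finset.Ioc N M, V n ^ e n : (PowerSeries ℤ)ˣ) : PowerSeries ℤ)
      - ((∏ n ∈ Finset.Icc 1 N, V n ^ e n : (PowerSeries ℤ)ˣ) : PowerSeries ℤ)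
      = ((∏ n ∈ Finset.Icc 1 N, V n ^ e n : (PowerSeries ℤ)ˣ) : PowerSeries ℤ)
        * (((∏ n ∈ Finset.Ioc N M, V n ^ e n : (PowerSeries ℤ)ˣ) : PowerSeries ℤ) - 1) := by
    ring
  rw [this]
  exact Dvd.dvd.mul_left hB _

lemma step (e : ℕ → ℤ) (m : ℕ) :
    PowerSeries.coeff (R := ℤ) (m + 1)
        ((∏ n ∈ Finset.Icc 1 (m + 1), V n ^ e n : (PowerSeries ℤ)ˣ) : PowerSeries ℤ)
      = PowerSeries.coeff (R := ℤ) (m + 1)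
          ((∏ n ∈ Finset.Icc 1 m, V n ^ e n : (PowerSeries ℤ)ˣ) : PowerSeries ℤ) - e (m + 1) := by
  rw [Finset.prod_Icc_succ_top (by omega : 1 ≤ m + 1), Units.val_mul]
  set A : PowerSeries ℤ := ((∏ n ∈ Finset.Icc 1 m, V n ^ e n : (PowerSeries ℤ)ˣ) : PowerSeries ℤ)
  set c : ℤ := e (m + 1)
  have h1 : PowerSeries.coeff (R := ℤ) (m + 1) (A * ((V (m+1) ^ c : (PowerSeries ℤ)ˣ) : PowerSeries ℤ))
      = PowerSeries.coeff (R := ℤ) (m + 1) (A * (1 - (c : PowerSeries ℤ) * PowerSeries.X ^ (m + 1))) := by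
    apply coeff_eq_of_dvd
    have hd := zpow_coe V hV (m + 1) (by omega) c
    have heq : A * ((V (m+1) ^ c : (PowerSeries ℤ)ˣ) : PowerSeries ℤ)
        - A * (1 - (c : PowerSeries ℤ) * PowerSeries.X ^ (m + 1))
        = A * (((V (m+1) ^ c : (PowerSeries ℤ)ˣ) : PowerSeries ℤ)
            - (1 - (c : PowerSeries ℤ) * PowerSeries.X ^ (m + 1))) := by ring
    rw [heq]
    exact Dvd.dvd.mul_left hd _
  rw [h1]
  have h2 : A * (1 - (c : PowerSeries ℤ) * PowerSeries.X ^ (m + 1))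
      = A - (c : PowerSeries ℤ) * (A * PowerSeries.X ^ (m + 1)) := by ring
  rw [h2, map_sub]
  have h3 : PowerSeries.coeff (R := ℤ) (m + 1) ((c : PowerSeries ℤ) * (A * PowerSeries.X ^ (m + 1)))
      = c * PowerSeries.coeff (R := ℤ) (m + 1) (A * PowerSeries.X ^ (m + 1)) := by
    rw [show (c : PowerSeries ℤ) = PowerSeries.C (R := ℤ) c from (eq_intCast (PowerSeries.C (R := ℤ)) c).symm,
      PowerSeries.coeff_C_mul]
  rw [h3]
  have h4 : PowerSeries.coeff (R := ℤ) (m + 1) (A * PowerSeries.X ^ (m + 1))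
      = PowerSeries.coeff (R := ℤ) 0 A := by
    simpa using PowerSeries.coeff_mul_X_pow A (m + 1) 0
  rw [h4, const_one V hV]
  ring

omit hV

noncomputable def expAux (h : PowerSeries ℤ) : ℕ → ℤ
  | 0 => 0
  | n + 1 =>
      PowerSeries.coeff (R := ℤ) (n + 1) h -
        PowerSeries.coeff (R := ℤ) (n + 1)
          ((∏ m ∈ (Finset.Icc 1 n).attach, V m.1 ^ (-(expAux h m.1)) : (PowerSeries ℤ)ˣ) :
            PowerSeries ℤ)
  decreasing_by
    have := m.2; simp only [Finset.mem_Icc] at this; omega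

end Stmt9Aux


/-- `Exp : q·ℤ⟦q⟧ → 1 + q·ℤ⟦q⟧`, `Exp(Σ_{n≥1} a_n q^n) = ∏_{n≥1} (1−q^n)^{−a_n}`, is a
group isomorphism from `(q·ℤ⟦q⟧, +)` onto `(1 + q·ℤ⟦q⟧, ×)`. The infinite product is
encoded by the requirement that, for every `N`, the coefficient of `q^N` of `Exp f`
agrees with that of the finite product `∏_{n=1}^{N} (1−q^n)^{−a_n}` (here `V n` is the
unit `1 − q^n` of `ℤ⟦q⟧`). -/

theorem stmt9 (V : ℕ → (PowerSeries ℤ)ˣ)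
    (hV : ∀ n, 1 ≤ n → (V n : PowerSeries ℤ) = 1 - PowerSeries.X ^ n) :
    ∃ Exp : PowerSeries ℤ → PowerSeries ℤ,
      (∀ f, PowerSeries.constantCoeff (R := ℤ) f = 0 → ∀ N : ℕ,
        PowerSeries.coeff (R := ℤ) N (Exp f) =
          PowerSeries.coeff (R := ℤ) N
            ((∏ n ∈ Finset.Icc 1 N, V n ^ (-(PowerSeries.coeff (R := ℤ) n f)) : (PowerSeries ℤ)ˣ) :
              PowerSeries ℤ)) ∧
      Exp 0 = 1 ∧
      (∀ f g, PowerSeries.constantCoeff (R := ℤ) f = 0 → PowerSeries.constantCoeff (R := ℤ) g = 0 →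
        Exp (f + g) = Exp f * Exp g) ∧
      (∀ f, PowerSeries.constantCoeff (R := ℤ) f = 0 → PowerSeries.constantCoeff (R := ℤ) (Exp f) = 1) ∧
      (∀ f g, PowerSeries.constantCoeff (R := ℤ) f = 0 → PowerSeries.constantCoeff (R := ℤ) g = 0 →
        Exp f = Exp g → f = g) ∧
      (∀ h, PowerSeries.constantCoeff (R := ℤ) h = 1 →
        ∃ f, PowerSeries.constantCoeff (R := ℤ) f = 0 ∧ Exp f = h) := by
  set Exp : PowerSeries ℤ → PowerSeries ℤ := fun f =>
    PowerSeries.mk fun N =>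
      PowerSeries.coeff (R := ℤ) N
        ((∏ n ∈ Finset.Icc 1 N, V n ^ (-(PowerSeries.coeff (R := ℤ) n f)) : (PowerSeries ℤ)ˣ) :
          PowerSeries ℤ) with hExp
  have hcoeff : ∀ f (N : ℕ),
      PowerSeries.coeff (R := ℤ) N (Exp f) =
        PowerSeries.coeff (R := ℤ) N
          ((∏ n ∈ Finset.Icc 1 N, V n ^ (-(PowerSeries.coeff (R := ℤ) n f)) : (PowerSeries ℤ)ˣ) :
            PowerSeries ℤ) := by
    intro f N
    rw [hExp]
    exact PowerSeries.coeff_mk _ _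
  have hconst : ∀ f, PowerSeries.constantCoeff (R := ℤ) (Exp f) = 1 := by
    intro f
    rw [← PowerSeries.coeff_zero_eq_constantCoeff, hcoeff]
    exact Stmt9Aux.const_one V hV _ 0
  refine ⟨Exp, fun f _ N => hcoeff f N, ?_, ?_, fun f _ => hconst f, ?_, ?_⟩
  · -- Exp 0 = 1
    ext N
    rw [hcoeff]
    simp
  · -- additivity
    intro f g hf hg
    ext N
    rw [hcoeff, PowerSeries.coeff_mul]
    have hprod : ((∏ n ∈ Finset.Icc 1 N, V n ^ (-(PowerSeries.coeff (R := ℤ) n (f + g))) :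
          (PowerSeries ℤ)ˣ) : PowerSeries ℤ)
        = ((∏ n ∈ Finset.Icc 1 N, V n ^ (-(PowerSeries.coeff (R := ℤ) n f)) :
            (PowerSeries ℤ)ˣ) : PowerSeries ℤ)
          * ((∏ n ∈ Finset.Icc 1 N, V n ^ (-(PowerSeries.coeff (R := ℤ) n g)) :
            (PowerSeries ℤ)ˣ) : PowerSeries ℤ) := by
      rw [← Units.val_mul, ← Finset.prod_mul_distrib]
      congr 1
      refine Finset.prod_congr rfl fun n _ => ?_
      rw [map_add, neg_add, zpow_add]
    rw [hprod, PowerSeries.coeff_mul]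
    refine Finset.sum_congr rfl fun p hp => ?_
    have hpN : p.1 ≤ N ∧ p.2 ≤ N := by
      have := Finset.HasAntidiagonal.mem_antidiagonal.mp hp; omega
    rw [hcoeff, hcoeff, Stmt9Aux.stab V hV _ p.1 N hpN.1, Stmt9Aux.stab V hV _ p.2 N hpN.2]
  · -- injectivity
    intro f g hf hg hfg
    ext n
    induction n using Nat.strong_induction_on with
    | _ n ih =>
      match n with
      | 0 =>
          simp only [PowerSeries.coeff_zero_eq_constantCoeff, hf, hg]
      | m + 1 =>
          have h1 := congrArg (PowerSeries.coeff (R := ℤ) (m + 1)) hfg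
          rw [hcoeff, hcoeff, Stmt9Aux.step V hV _ m, Stmt9Aux.step V hV _ m] at h1
          have h2 : (∏ n ∈ Finset.Icc 1 m, V n ^ (-(PowerSeries.coeff (R := ℤ) n f)) :
                (PowerSeries ℤ)ˣ)
              = (∏ n ∈ Finset.Icc 1 m, V n ^ (-(PowerSeries.coeff (R := ℤ) n g)) :
                (PowerSeries ℤ)ˣ) := by
            refine Finset.prod_congr rfl fun x hx => ?_
            have hxm : x < m + 1 := by
              have := Finset.mem_Icc.mp hx; omega
            rw [ih x hxm]
          rw [h2] at h1
          omega
  · -- surjectivity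
    intro h hh
    refine ⟨PowerSeries.mk (Stmt9Aux.expAux V h), ?_, ?_⟩
    · rw [← PowerSeries.coeff_zero_eq_constantCoeff, PowerSeries.coeff_mk, Stmt9Aux.expAux]
    · ext N
      match N with
      | 0 =>
          rw [hcoeff, Stmt9Aux.const_one V hV, PowerSeries.coeff_zero_eq_constantCoeff, hh]
      | m + 1 =>
          rw [hcoeff, Stmt9Aux.step V hV _ m]
          have hcm : ∀ n : ℕ, PowerSeries.coeff (R := ℤ) n (PowerSeries.mk (Stmt9Aux.expAux V h)) = Stmt9Aux.expAux V h n :=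
            fun n => PowerSeries.coeff_mk _ _
          rw [hcm (m + 1)]
          have hrec : Stmt9Aux.expAux V h (m + 1) = PowerSeries.coeff (R := ℤ) (m + 1) h -
              PowerSeries.coeff (R := ℤ) (m + 1)
                ((∏ n ∈ (Finset.Icc 1 m).attach, V n.1 ^ (-(Stmt9Aux.expAux V h n.1)) :
                  (PowerSeries ℤ)ˣ) : PowerSeries ℤ) := by
            rw [Stmt9Aux.expAux]
          have hatt : (∏ n ∈ (Finset.Icc 1 m).attach, V n.1 ^ (-(Stmt9Aux.expAux V h n.1)) :
                (PowerSeries ℤ)ˣ)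
              = (∏ n ∈ Finset.Icc 1 m, V n ^ (-(PowerSeries.coeff (R := ℤ) n (PowerSeries.mk (Stmt9Aux.expAux V h)))) :
                (PowerSeries ℤ)ˣ) := by
            rw [← Finset.prod_attach (Finset.Icc 1 m)
              (fun n => V n ^ (-(PowerSeries.coeff (R := ℤ) n (PowerSeries.mk (Stmt9Aux.expAux V h)))))]
            exact Finset.prod_congr rfl fun x _ => by rw [hcm]
          rw [hrec, hatt]
          ring
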